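/- arXiv:1802.03448 — 4 statements merged into one kernel-verified Lean document; each statement's English description precedes it below -/
import Mathlib

section
/- Let p be an odd prime and A the 3-dimensional F_p-algebra with basis x, y, z where xy = z, yx = −z, and all other products of basis elements are zero. Then A has exactly p + 4 left ideals (including the zero ideal and A itself). -/
/-- Multiplication on the algebra `A_{3,5}`: for elements `a·x + b·y + c·z` recorded
as triples, `(a,b,c)·(a',b',c') = (0, 0, a·b' − b·a')` (from `xy = z`, `yx = −z`,
all other products of basis elements zero). -/
def A35mul {p : ℕ} (u v : ZMod p × ZMod p × ZMod p) : ZMod p × ZMod p × ZMod p :=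
  (0, 0, u.1 * v.2.1 - u.2.1 * v.1)

/-!
All products lie on the line `𝔽_p z`, and every nonzero left ideal contains that line:
for `v` in it, `x·v = v₂ z` and `y·v = -v₁ z`, and if both vanish then `v` is itself a
nonzero multiple of `z`. Hence the left ideals are `0` together with all subspaces containing
`𝔽_p z`, i.e. the subspaces of the plane `A / 𝔽_p z`: one zero space, `p + 1` lines and the
whole plane.
-/

open Module

theorem Submodule.card_eq_of_finrank_eq_two {k V : Type*} [Field k] [Finite k] [AddCommGroup V]
    [Module k V] (h : finrank k V = 2) : Nat.card (Submodule k V) = Nat.card k + 3 := by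
  have : FiniteDimensional k V := Module.finite_of_finrank_eq_succ h
  have card_one : Nat.card {H : Submodule k V // finrank k H = 1} = Nat.card k + 1 := by
    rw [← Nat.card_congr (Projectivization.equivSubmodule k V),
      Projectivization.card_of_finrank_two k V h]
  have card_two : Nat.card {H : Submodule k V // finrank k H = 2} = 1 := by
    have finrank_eq_two_iff (H : Submodule k V) : finrank k H = 2 ↔ H = ⊤ :=
      ⟨fun hH => Submodule.eq_top_of_finrank_eq (hH.trans h.symm),
        fun hH => hH ▸ (finrank_top k V).trans h⟩
    simp [Nat.card_congr (Equiv.subtypeEquivRight finrank_eq_two_iff)]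
  have : ∀ n : Fin 3, Finite {H : Submodule k V // finrank k H = n} := fun n =>
    Nat.finite_of_card_ne_zero (by fin_cases n <;> simp [card_one, card_two])
  have finrank_lt (H : Submodule k V) : finrank k H < 3 := by
    have := H.finrank_le
    omega
  calc Nat.card (Submodule k V)
        = Nat.card (Σ n : Fin 3, {H : Submodule k V // finrank k H = n}) :=
      Nat.card_congr <| (Equiv.sigmaFiberEquiv fun H => (⟨_, finrank_lt H⟩ : Fin 3)).symm.trans
        (Equiv.sigmaCongrRight fun _ => Equiv.subtypeEquivRight fun _ => Fin.ext_iff)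
    _ = Nat.card k + 3 := by
      simp [Nat.card_sigma, Fin.sum_univ_three, card_one, card_two]
      ring

section A35

variable (p : ℕ)

local notation "𝔸" => ZMod p × ZMod p × ZMod p

def A35zAxis : Submodule (ZMod p) 𝔸 := ZMod p ∙ (0, 0, 1)

variable {p}

lemma A35mul_eq_smul (u v : 𝔸) : A35mul u v = (u.1 * v.2.1 - u.2.1 * v.1) • (0, 0, 1) := by
  simp [A35mul]

lemma A35mul_mem_A35zAxis (u v : 𝔸) : A35mul u v ∈ A35zAxis p := by
  rw [A35mul_eq_smul]
  exact Submodule.smul_mem _ _ (Submodule.mem_span_singleton_self _)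

variable [Fact p.Prime]

lemma A35zAxis_le_of_ne_bot {I : Submodule (ZMod p) 𝔸} (hI : ∀ a x, x ∈ I → A35mul a x ∈ I)
    (hne : I ≠ ⊥) : A35zAxis p ≤ I := by
  obtain ⟨x, hxI, hx⟩ := I.ne_bot_iff.mp hne
  rw [A35zAxis, Submodule.span_singleton_le_iff_mem]
  by_cases h1 : x.1 = 0
  · by_cases h2 : x.2.1 = 0
    · have h3 : x.2.2 ≠ 0 := fun h3 => hx (by simp [Prod.ext_iff, h1, h2, h3])
      convert I.smul_mem x.2.2⁻¹ hxI using 1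
      simp [Prod.ext_iff, h1, h2, h3]
    · convert hI (x.2.1⁻¹, 0, 0) x hxI using 1
      simp [A35mul, h2]
  · convert hI (0, -x.1⁻¹, 0) x hxI using 1
    simp [A35mul, h1]

theorem A35_leftIdeals_eq_insert_bot_Ici :
    {I : Submodule (ZMod p) 𝔸 | ∀ a x, x ∈ I → A35mul a x ∈ I} =
      insert ⊥ (Set.Ici (A35zAxis p)) := by
  ext I
  refine ⟨fun hI => or_iff_not_imp_left.mpr (A35zAxis_le_of_ne_bot hI), ?_⟩
  rintro (rfl | hle) a x hx
  · simp_all [A35mul]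
  · exact hle (A35mul_mem_A35zAxis a x)

lemma A35zAxis_ne_bot : A35zAxis p ≠ ⊥ := by
  simp [A35zAxis]

theorem finrank_quotient_A35zAxis : finrank (ZMod p) (𝔸 ⧸ A35zAxis p) = 2 := by
  have h := Submodule.finrank_quotient_add_finrank (A35zAxis p)
  have h1 : finrank (ZMod p) (A35zAxis p) = 1 := finrank_span_singleton (by simp)
  have h3 : finrank (ZMod p) 𝔸 = 3 := by simp
  omega

end A35

theorem A35_left_ideal_count_general (p : ℕ) [Fact p.Prime] :
    Nat.card {I : AddSubgroup (ZMod p × ZMod p × ZMod p) //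
      ∀ a x : ZMod p × ZMod p × ZMod p, x ∈ I → A35mul a x ∈ I} = p + 4 := by
  have : Finite (Submodule (ZMod p) (ZMod p × ZMod p × ZMod p)) :=
    Finite.of_injective _ SetLike.coe_injective
  calc _ = Nat.card {I : Submodule (ZMod p) (ZMod p × ZMod p × ZMod p) |
        ∀ a x, x ∈ I → A35mul a x ∈ I} :=
      Nat.card_congr <| (AddSubgroup.toZModSubmodule p).toEquiv.subtypeEquiv fun _ => .rfl
    _ = Nat.card (Set.Ici (A35zAxis p)) + 1 := by
      rw [A35_leftIdeals_eq_insert_bot_Ici, Nat.card_coe_set_eq, Nat.card_coe_set_eq,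
        Set.ncard_insert_of_notMem (by simpa using A35zAxis_ne_bot)]
    _ = Nat.card (Submodule (ZMod p) ((ZMod p × ZMod p × ZMod p) ⧸ A35zAxis p)) + 1 := by
      rw [Nat.card_congr (Submodule.comapMkQRelIso (A35zAxis p)).toEquiv]
    _ = p + 4 := by
      rw [Submodule.card_eq_of_finrank_eq_two finrank_quotient_A35zAxis, Nat.card_zmod]

/-- For `p` an odd prime, the algebra `A_{3,5}` has exactly `p + 4`
left ideals (additive subgroups closed under left multiplication), including the
zero ideal and `A` itself. -/
theorem A35_left_ideal_count (p : ℕ) [Fact p.Prime] (hp : Odd p) :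
    Nat.card {I : AddSubgroup (ZMod p × ZMod p × ZMod p) //
      ∀ a x : ZMod p × ZMod p × ZMod p, x ∈ I → A35mul a x ∈ I} = p + 4 :=
  A35_left_ideal_count_general p
end

section
/- Let p be an odd prime, δ ∈ F_p, and A the 3-dimensional F_p-algebra with basis x, y, z where x² = z, y² = δz, xy = z, yx = 0, and zw = wz = 0 for all w ∈ A. Then for the circle operation u ∘ v = u + v + uv, one has (a x + b y + c z)^{∘ r} = r a x + r b y + (r c + C(r,2)(a² + ab + δ b²)) z for all r ≥ 1; in particular every element has order dividing p and (A, ∘) is isomorphic to the Heisenberg group Heis_3(F_p). -/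
/-!
Since all products land in the line spanned by `z`, which annihilates everything, the circle
power of `u = (a, b, c)` is `r u` plus `C(r, 2)` copies of `u u = (a² + ab + δb²) z`; for odd `p`
both `p` and `C(p, 2) = p (p - 1) / 2` vanish in `ZMod p`. For the isomorphism, the third coordinate
of `u ∘ v` picks up the bilinear term `a a' + a b' + δ b b'`; its symmetric part `a a' + δ b b'` is
the polarisation of `(a² + δ b²) / 2`, so subtracting that quadratic form turns `∘` into the
Heisenberg law `(a, b, c) (a', b', c') = (a + a', b + b', c + c' + a b')`.
-/

/-- Multiplication on the algebra `A^δ_{3,4}`: for elements `a·x + b·y + c·z`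
recorded as triples, using `x² = z`, `y² = δz`, `xy = z`, `yx = 0`, and all products
with `z` zero, one gets `(a,b,c)·(a',b',c') = (0, 0, a·a' + a·b' + δ·b·b')`. -/
def A34mul {p : ℕ} (δ : ZMod p) (u v : ZMod p × ZMod p × ZMod p) :
    ZMod p × ZMod p × ZMod p :=
  (0, 0, u.1 * v.1 + u.1 * v.2.1 + δ * u.2.1 * v.2.1)

/-- The circle operation `u ∘ v = u + v + u·v` on `A^δ_{3,4}`. -/
def A34circ {p : ℕ} (δ : ZMod p) (u v : ZMod p × ZMod p × ZMod p) :
    ZMod p × ZMod p × ZMod p :=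
  u + v + A34mul δ u v

/-- The `r`-fold circle power `u^{∘ r}` in `A^δ_{3,4}`. -/
def A34circPow {p : ℕ} (δ : ZMod p) (u : ZMod p × ZMod p × ZMod p) :
    ℕ → ZMod p × ZMod p × ZMod p
  | 0 => 0
  | n + 1 => A34circ δ u (A34circPow δ u n)

/-- `M` is upper unitriangular: `1`s on the diagonal, `0`s below. -/
def IsUnitriangular {p : ℕ} (M : Matrix (Fin 3) (Fin 3) (ZMod p)) : Prop :=
  M 0 0 = 1 ∧ M 1 1 = 1 ∧ M 2 2 = 1 ∧ M 1 0 = 0 ∧ M 2 0 = 0 ∧ M 2 1 = 0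

theorem Nat.dvd_choose_two_self_of_odd {n : ℕ} (hn : Odd n) : n ∣ n.choose 2 := by
  obtain ⟨k, rfl⟩ := hn
  refine ⟨k, ?_⟩
  rw [Nat.choose_two_right, Nat.add_sub_cancel, mul_left_comm, Nat.mul_div_cancel_left _ two_pos]

section CirclePower

variable {p : ℕ} (δ : ZMod p) (u : ZMod p × ZMod p × ZMod p)

theorem A34circPow_eq (r : ℕ) :
    A34circPow δ u r =
      ((r : ZMod p) * u.1, (r : ZMod p) * u.2.1,
        (r : ZMod p) * u.2.2 +
          ((r.choose 2 : ℕ) : ZMod p) * (u.1 ^ 2 + u.1 * u.2.1 + δ * u.2.1 ^ 2)) := by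
  induction r with
  | zero => simp [A34circPow, Prod.ext_iff]
  | succ n ih =>
    rw [A34circPow, ih, Nat.choose_succ_succ, Nat.choose_one_right]
    simp only [A34circ, A34mul, Prod.ext_iff, Prod.fst_add, Prod.snd_add, Nat.cast_add,
      Nat.cast_one]
    exact ⟨by ring, by ring, by ring⟩

theorem A34circPow_self (hp : Odd p) : A34circPow δ u p = 0 := by
  have hchoose : ((p.choose 2 : ℕ) : ZMod p) = 0 :=
    (ZMod.natCast_eq_zero_iff _ _).2 (Nat.dvd_choose_two_self_of_odd hp)
  simp [A34circPow_eq, hchoose, Prod.ext_iff]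

end CirclePower

section Heisenberg

def heisMatrix {R : Type*} [Zero R] [One R] (a b c : R) : Matrix (Fin 3) (Fin 3) R :=
  !![1, a, c; 0, 1, b; 0, 0, 1]

theorem heisMatrix_mul {R : Type*} [Semiring R] (a b c a' b' c' : R) :
    heisMatrix a b c * heisMatrix a' b' c' = heisMatrix (a + a') (b + b') (c + c' + a * b') := by
  ext i j
  fin_cases i <;> fin_cases j <;>
    simp [heisMatrix, Matrix.mul_apply, Fin.sum_univ_three, add_comm, add_assoc]

variable {p : ℕ}

theorem isUnitriangular_heisMatrix (a b c : ZMod p) : IsUnitriangular (heisMatrix a b c) := by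
  simp [IsUnitriangular, heisMatrix]

theorem IsUnitriangular.heisMatrix_eq {M : Matrix (Fin 3) (Fin 3) (ZMod p)}
    (hM : IsUnitriangular M) : heisMatrix (M 0 1) (M 1 2) (M 0 2) = M := by
  obtain ⟨h00, h11, h22, h10, h20, h21⟩ := hM
  ext i j
  fin_cases i <;> fin_cases j <;> simp [heisMatrix, h00, h11, h22, h10, h20, h21]

variable [Invertible (2 : ZMod p)] (δ : ZMod p)

def A34halfSq (a b : ZMod p) : ZMod p :=
  ⅟2 * (a ^ 2 + δ * b ^ 2)

def A34toHeis (u : ZMod p × ZMod p × ZMod p) : Matrix (Fin 3) (Fin 3) (ZMod p) :=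
  heisMatrix u.1 u.2.1 (u.2.2 - A34halfSq δ u.1 u.2.1)

theorem A34toHeis_circ (u v : ZMod p × ZMod p × ZMod p) :
    A34toHeis δ (A34circ δ u v) = A34toHeis δ u * A34toHeis δ v := by
  obtain ⟨a, b, c⟩ := u
  obtain ⟨a', b', c'⟩ := v
  have htwo : ⅟(2 : ZMod p) * 2 = 1 := invOf_mul_self 2
  simp only [A34toHeis, heisMatrix_mul, A34circ, A34mul, A34halfSq, Prod.mk_add_mk, add_zero]
  congr 1
  linear_combination -(a * a' + δ * b * b') * htwo

def A34equivUnitriangular :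
    (ZMod p × ZMod p × ZMod p) ≃ {M : Matrix (Fin 3) (Fin 3) (ZMod p) // IsUnitriangular M} where
  toFun u := ⟨A34toHeis δ u, isUnitriangular_heisMatrix _ _ _⟩
  invFun M := (M.1 0 1, M.1 1 2, M.1 0 2 + A34halfSq δ (M.1 0 1) (M.1 1 2))
  left_inv u := by simp [A34toHeis, heisMatrix]
  right_inv M := by
    ext : 1
    simpa [A34toHeis] using M.2.heisMatrix_eq

end Heisenberg

theorem A34_circ_heisenberg_general (p : ℕ) (hp : Odd p) (δ : ZMod p) :
    (∀ u : ZMod p × ZMod p × ZMod p, ∀ r : ℕ, 1 ≤ r →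
      A34circPow δ u r =
        ((r : ZMod p) * u.1, (r : ZMod p) * u.2.1,
          (r : ZMod p) * u.2.2 +
            ((r.choose 2 : ℕ) : ZMod p) *
              (u.1 ^ 2 + u.1 * u.2.1 + δ * u.2.1 ^ 2))) ∧
    (∀ u : ZMod p × ZMod p × ZMod p, A34circPow δ u p = 0) ∧
    (∃ e : (ZMod p × ZMod p × ZMod p) ≃
        {M : Matrix (Fin 3) (Fin 3) (ZMod p) // IsUnitriangular M},
      ∀ u v : ZMod p × ZMod p × ZMod p,
        (e (A34circ δ u v) : Matrix (Fin 3) (Fin 3) (ZMod p)) =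
          (e u : Matrix (Fin 3) (Fin 3) (ZMod p)) *
          (e v : Matrix (Fin 3) (Fin 3) (ZMod p))) := by
  have htwo : IsUnit (2 : ZMod p) := by
    simpa using (ZMod.isUnit_iff_coprime 2 p).2 hp.coprime_two_left
  let := htwo.invertible
  exact ⟨fun u r _ => A34circPow_eq δ u r, fun u => A34circPow_self δ u hp,
    A34equivUnitriangular δ, A34toHeis_circ δ⟩

/-- For `p` an odd prime and `δ ∈ F_p`, in `A = A^δ_{3,4}` one has
`(ax + by + cz)^{∘ r} = (ra, rb, rc + C(r,2)(a² + ab + δb²))` for all `r ≥ 1`;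
in particular every element has order dividing `p`, and the circle group `(A, ∘)`
is isomorphic to the Heisenberg group `Heis₃(F_p)` of upper unitriangular matrices. -/
theorem A34_circ_heisenberg (p : ℕ) [Fact p.Prime] (hp : Odd p) (δ : ZMod p) :
    (∀ u : ZMod p × ZMod p × ZMod p, ∀ r : ℕ, 1 ≤ r →
      A34circPow δ u r =
        ((r : ZMod p) * u.1, (r : ZMod p) * u.2.1,
          (r : ZMod p) * u.2.2 +
            ((r.choose 2 : ℕ) : ZMod p) *
              (u.1 ^ 2 + u.1 * u.2.1 + δ * u.2.1 ^ 2))) ∧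
    (∀ u : ZMod p × ZMod p × ZMod p, A34circPow δ u p = 0) ∧
    (∃ e : (ZMod p × ZMod p × ZMod p) ≃
        {M : Matrix (Fin 3) (Fin 3) (ZMod p) // IsUnitriangular M},
      ∀ u v : ZMod p × ZMod p × ZMod p,
        (e (A34circ δ u v) : Matrix (Fin 3) (Fin 3) (ZMod p)) =
          (e u : Matrix (Fin 3) (Fin 3) (ZMod p)) *
          (e v : Matrix (Fin 3) (Fin 3) (ZMod p))) :=
  A34_circ_heisenberg_general p hp δ
end

section
/- Let G be a finite group with an exact factorization G = HJ (H, J subgroups with |H||J| = |G| and H ∩ J = {e}), and let (G, ·, ∘) be the associated skew left brace with g ∘ x = g_l · x · g_r for g = g_l g_r, g_l ∈ H, g_r ∈ J. Then a subgroup G' of (G, ·) is ∘-stable if and only if G' is closed under conjugation by all elements of H. -/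
/-! Writing `g = l g * r g`, the element `(g ∘ x) g⁻¹ = l g * x * r g * (r g)⁻¹ * (l g)⁻¹` is the
conjugate of `x` by `l g ∈ H`, so `∘`-stability is closure under conjugation by the left factors;
since `H ∩ J = 1`, every `h ∈ H` is its own left factor. -/

theorem mul_mul_mul_inv_eq_conj {G : Type*} [Group G] {a b g : G} (hg : g = a * b) (x : G) :
    a * x * b * g⁻¹ = a * x * a⁻¹ := by
  subst hg
  group

theorem Subgroup.eq_one_of_mul_mem_of_inf_eq_bot {G : Type*} [Group G] {H J : Subgroup G}
    (hint : H ⊓ J = ⊥) {a b : G} (ha : a ∈ H) (hb : b ∈ J) (hab : a * b ∈ H) : b = 1 := by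
  have hbH : b ∈ H := by simpa using H.mul_mem (H.inv_mem ha) hab
  simpa [hint] using Subgroup.mem_inf.mpr ⟨hbH, hb⟩

theorem exact_factorization_circ_stable_iff_general {G : Type*} [Group G]
    (H J : Subgroup G)
    (hint : H ⊓ J = ⊥)
    (l r : G → G) (hl : ∀ g, l g ∈ H) (hr : ∀ g, r g ∈ J)
    (hfac : ∀ g, g = l g * r g)
    (G' : Subgroup G) :
    (∀ g : G, ∀ x ∈ G', (l g * x * r g) * g⁻¹ ∈ G') ↔
      (∀ h ∈ H, ∀ x ∈ G', h * x * h⁻¹ ∈ G') := by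
  constructor
  · intro hstable h hh x hx
    have hr_one : r h = 1 :=
      Subgroup.eq_one_of_mul_mem_of_inf_eq_bot hint (hl h) (hr h) (hfac h ▸ hh)
    have hl_self : l h = h := by simpa [hr_one] using (hfac h).symm
    simpa [hl_self, hr_one] using hstable h x hx
  · intro hconj g x hx
    rw [mul_mul_mul_inv_eq_conj (hfac g)]
    exact hconj (l g) (hl g) x hx

/-- Let `G` be a finite group with an exact factorization `G = HJ`
(`|H|·|J| = |G|`, `H ∩ J = {e}`, each `g` factoring uniquely as `g = l g * r g`
with `l g ∈ H`, `r g ∈ J`), and consider the associated skew left brace on `G` with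
`g ∘ x = l g * x * r g`. Then a subgroup `G'` of `(G, ·)` is `∘`-stable
(`(g ∘ x) · g⁻¹ ∈ G'` for all `g ∈ G`, `x ∈ G'`) if and only if `G'` is closed
under conjugation by all elements of `H`. -/
theorem exact_factorization_circ_stable_iff {G : Type*} [Group G] [Finite G]
    (H J : Subgroup G)
    (hcard : Nat.card H * Nat.card J = Nat.card G)
    (hint : H ⊓ J = ⊥)
    (l r : G → G) (hl : ∀ g, l g ∈ H) (hr : ∀ g, r g ∈ J)
    (hfac : ∀ g, g = l g * r g)
    (G' : Subgroup G) :
    (∀ g : G, ∀ x ∈ G', (l g * x * r g) * g⁻¹ ∈ G') ↔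
      (∀ h ∈ H, ∀ x ∈ G', h * x * h⁻¹ ∈ G') :=
  exact_factorization_circ_stable_iff_general H J hint l r hl hr hfac G'
end

section
/- Let n ≥ 5 and consider the skew left brace structure on G = S_n arising from the exact factorization S_n = A_n · C, where C is the order-2 subgroup generated by a fixed transposition, with operation g ∘ x = g_l x g_r for g = g_l g_r, g_l ∈ A_n, g_r ∈ C. Then the only ∘-stable subgroups of S_n are the trivial subgroup, A_n, and S_n itself; equivalently, the only subgroups of S_n closed under conjugation by all elements of A_n are {e}, A_n, and S_n. -/
/-!
Let `A = Aₙ`. The subgroup `G' ∩ A` is normal in the simple group `A`, so it is trivial or all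
of `A`. If it is `A`, then `G'` lies between `A` and `Sₙ`, and `A` has index two. If it is
trivial, every commutator `a g a⁻¹ g⁻¹` with `a ∈ A`, `g ∈ G'` lies in `G' ∩ A`, so `G'`
centralizes `A`; but the centralizer of `A` is a normal subgroup of `Sₙ`, hence trivial or
containing the non-abelian group `A`, so it is trivial.
-/

open Equiv Equiv.Perm Subgroup

namespace Subgroup

variable {G : Type*} [Group G] {H N : Subgroup G}

theorem normal_subgroupOf_of_conj_mem (hH : ∀ a ∈ N, ∀ x ∈ H, a * x * a⁻¹ ∈ H) :
    (H.subgroupOf N).Normal :=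
  ⟨fun x hx a => by simpa only [mem_subgroupOf, coe_mul, coe_inv] using hH a a.2 x hx⟩

theorem le_centralizer_of_conj_mem_of_disjoint [N.Normal]
    (hH : ∀ a ∈ N, ∀ x ∈ H, a * x * a⁻¹ ∈ H) (hdisj : Disjoint H N) :
    H ≤ centralizer N := by
  intro x hx a ha
  have hcomm : a * x * a⁻¹ * x⁻¹ ∈ H ⊓ N := by
    refine ⟨H.mul_mem (hH a ha x hx) (H.inv_mem hx), ?_⟩
    rw [mul_assoc, mul_assoc]
    exact N.mul_mem ha (by simpa only [mul_assoc] using ‹N.Normal›.conj_mem _ (N.inv_mem ha) x)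
  rwa [hdisj.eq_bot, mem_bot, mul_inv_eq_one, mul_inv_eq_iff_eq_mul] at hcomm

theorem eq_or_eq_top_of_le_of_index_eq_two {K : Subgroup G} (hK : K.index = 2) (hle : K ≤ H) :
    H = K ∨ H = ⊤ := by
  have hdvd : H.index ∣ 2 := hK ▸ index_dvd_of_le hle
  rcases (Nat.dvd_prime Nat.prime_two).mp hdvd with h | h
  · exact Or.inr (index_eq_one.mp h)
  · have hrel : K.relIndex H * H.index = K.index := relIndex_mul_index hle
    rw [h, hK, Nat.mul_eq_right two_ne_zero, relIndex_eq_one] at hrel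
    exact Or.inl (le_antisymm hrel hle)

end Subgroup

namespace Equiv.Perm

variable {α : Type*} [Fintype α] [DecidableEq α]

theorem centralizer_alternatingGroup_eq_bot (hα : 5 ≤ Nat.card α) :
    centralizer (alternatingGroup α : Set (Perm α)) = ⊥ := by
  by_contra hne
  have : Nontrivial (centralizer (alternatingGroup α : Set (Perm α))) :=
    (nontrivial_iff_ne_bot _).mpr hne
  have hcomm : IsMulCommutative (alternatingGroup α) :=
    le_centralizer_iff_isMulCommutative.mp (alternatingGroup_le_of_normal hα this)
  have := alternatingGroup.isMulCommutative_iff_card_le_three.mp hcomm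
  omega

end Equiv.Perm

/-- Let `n ≥ 5`. For the skew left brace on `S_n` arising from the
exact factorization `S_n = A_n · ⟨τ⟩` (`τ` a transposition), a subgroup is `∘`-stable
iff it is closed under conjugation by all even permutations; and the only subgroups
of `S_n` closed under conjugation by all elements of `A_n` are `{e}`, `A_n`, and
`S_n`. -/
theorem circ_stable_subgroups_of_Sn (n : ℕ) (hn : 5 ≤ n)
    (G' : Subgroup (Equiv.Perm (Fin n)))
    (hstable : ∀ a ∈ alternatingGroup (Fin n), ∀ x ∈ G', a * x * a⁻¹ ∈ G') :
    G' = ⊥ ∨ G' = alternatingGroup (Fin n) ∨ G' = ⊤ := by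
  have hcard : 5 ≤ Nat.card (Fin n) := by simpa using hn
  have : Nontrivial (Fin n) := Fin.nontrivial_iff_two_le.mpr (by omega)
  have hnormal : (G'.subgroupOf (alternatingGroup (Fin n))).Normal :=
    normal_subgroupOf_of_conj_mem hstable
  rcases (alternatingGroup.isSimpleGroup hcard).eq_bot_or_eq_top_of_normal _ hnormal with h | h
  · left
    have hcent := le_centralizer_of_conj_mem_of_disjoint hstable (subgroupOf_eq_bot.mp h)
    rwa [centralizer_alternatingGroup_eq_bot hcard, le_bot_iff] at hcent
  · right
    exact eq_or_eq_top_of_le_of_index_eq_two alternatingGroup.index_eq_two (subgroupOf_eq_top.mp h)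
end
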